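/- For every natural number d, every pair of angle sequences θ, φ : {0,…,d} → ℝ, and every λ ∈ ℝ, there exist polynomials P, Q ∈ ℂ[z] with deg P ≤ d and deg Q ≤ d, satisfying |P(z)|² + |Q(z)|² = 1 for all z with |z| = 1, such that for every n ≥ 1 and every unitary matrix U ∈ M_n(ℂ), the (2n)×(2n) matrix product (∏_{j=d}^{1} (R(θ_j, φ_j, 0) ⊗ I_n) · fromBlocks(U, 0, 0, I_n)) · (R(θ_0, φ_0, λ) ⊗ I_n) (factors ordered with j = d leftmost) has top-left n×n block equal to P(U) and bottom-left n×n block equal to Q(U), where P(U) and Q(U) denote the evaluation of the polynomials at the matrix U. -/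

import Mathlib

open Complex Matrix

/-- The GQSP signal-processing rotation `R(θ, φ, λ)`. -/
noncomputable def gqspR (θ φ l : ℝ) : Matrix (Fin 2) (Fin 2) ℂ :=
  !![Complex.exp (Complex.I * (l + φ)) * Real.cos θ, Complex.exp (Complex.I * φ) * Real.sin θ;
     Complex.exp (Complex.I * l) * Real.sin θ, -(Real.cos θ : ℂ)]

/-- The Kronecker product `A ⊗ I_n` of a 2×2 matrix with the n×n identity,
written as a 2×2 block matrix of n×n blocks. -/
noncomputable def kronI (n : ℕ) (A : Matrix (Fin 2) (Fin 2) ℂ) :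
    Matrix (Fin n ⊕ Fin n) (Fin n ⊕ Fin n) ℂ :=
  Matrix.fromBlocks (A 0 0 • 1) (A 0 1 • 1) (A 1 0 • 1) (A 1 1 • 1)

/-- The GQSP matrix product
`(∏_{j=d}^{1} (R(θ_j, φ_j, 0) ⊗ I_n) · fromBlocks(U, 0, 0, I_n)) · (R(θ_0, φ_0, λ) ⊗ I_n)`,
with the factor `j = d` leftmost; `gqspProdM n θ φ l U d` is this product for degree `d`. -/
noncomputable def gqspProdM (n : ℕ) (θ φ : ℕ → ℝ) (l : ℝ) (U : Matrix (Fin n) (Fin n) ℂ) :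
    ℕ → Matrix (Fin n ⊕ Fin n) (Fin n ⊕ Fin n) ℂ
  | 0 => kronI n (gqspR (θ 0) (φ 0) l)
  | k + 1 =>
      (kronI n (gqspR (θ (k + 1)) (φ (k + 1)) 0) * Matrix.fromBlocks U 0 0 1) *
        gqspProdM n θ φ l U k

/-!
Induction on `d`. If the left block column of the degree-`k` product is `(P(U), Q(U))`, then
`fromBlocks U 0 0 1` turns it into `(U P(U), Q(U))` and `R ⊗ I_n` mixes the two blocks by the
entries of `R`, so the new column is `(P', Q')(U)` with `(P', Q') = R · (X P, Q)`. Since `R` is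
unitary and multiplication by `z` is an isometry for `|z| = 1`, this step preserves
`|P(z)|² + |Q(z)|²`, and it raises degrees by at most one.
-/

open Polynomial

section Blocks

variable {l m n o α : Type*} [Fintype l] [Fintype m] [NonUnitalNonAssocSemiring α]

theorem toBlocks₁₁_fromBlocks_mul (A : Matrix n l α) (B : Matrix n m α) (C : Matrix o l α)
    (D : Matrix o m α) (M : Matrix (l ⊕ m) (l ⊕ m) α) :
    (fromBlocks A B C D * M).toBlocks₁₁ = A * M.toBlocks₁₁ + B * M.toBlocks₂₁ := by
  conv_lhs => rw [← fromBlocks_toBlocks M, fromBlocks_multiply]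
  exact toBlocks_fromBlocks₁₁ ..

theorem toBlocks₂₁_fromBlocks_mul (A : Matrix n l α) (B : Matrix n m α) (C : Matrix o l α)
    (D : Matrix o m α) (M : Matrix (l ⊕ m) (l ⊕ m) α) :
    (fromBlocks A B C D * M).toBlocks₂₁ = C * M.toBlocks₁₁ + D * M.toBlocks₂₁ := by
  conv_lhs => rw [← fromBlocks_toBlocks M, fromBlocks_multiply]
  exact toBlocks_fromBlocks₂₁ ..

end Blocks

theorem kronI_mul_fromBlocks_one {n : ℕ} (A : Matrix (Fin 2) (Fin 2) ℂ)
    (U : Matrix (Fin n) (Fin n) ℂ) :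
    kronI n A * fromBlocks U 0 0 1 =
      fromBlocks (A 0 0 • U) (A 0 1 • 1) (A 1 0 • U) (A 1 1 • 1) := by
  simp [kronI, fromBlocks_multiply]

theorem star_mulVec_dotProduct_mulVec_of_mem_unitaryGroup {m : Type*} [Fintype m] [DecidableEq m]
    {A : Matrix m m ℂ} (hA : A ∈ unitaryGroup m ℂ) (v : m → ℂ) :
    star (A *ᵥ v) ⬝ᵥ (A *ᵥ v) = star v ⬝ᵥ v := by
  rw [star_mulVec, dotProduct_mulVec, vecMul_vecMul, ← star_eq_conjTranspose,
    mem_unitaryGroup_iff'.mp hA, vecMul_one]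

theorem normSq_add_normSq_of_mem_unitaryGroup {A : Matrix (Fin 2) (Fin 2) ℂ}
    (hA : A ∈ unitaryGroup (Fin 2) ℂ) (x y : ℂ) :
    normSq (A 0 0 * x + A 0 1 * y) + normSq (A 1 0 * x + A 1 1 * y) = normSq x + normSq y := by
  have h := star_mulVec_dotProduct_mulVec_of_mem_unitaryGroup hA ![x, y]
  simp only [dotProduct, mulVec, Fin.sum_univ_two, Pi.star_apply, cons_val_zero, cons_val_one,
    RCLike.star_def] at h
  apply ofReal_injective
  simp only [ofReal_add, normSq_eq_conj_mul_self]
  linear_combination h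

theorem gqspR_mem_unitaryGroup (θ φ l : ℝ) : gqspR θ φ l ∈ unitaryGroup (Fin 2) ℂ := by
  have hcs : (Real.cos θ : ℂ) ^ 2 + (Real.sin θ : ℂ) ^ 2 = 1 := by
    exact_mod_cast Real.cos_sq_add_sin_sq θ
  rw [mem_unitaryGroup_iff']
  ext i j
  fin_cases i <;> fin_cases j <;>
    simp [gqspR, star_eq_conjTranspose, mul_apply, Fin.sum_univ_two, ← exp_conj,
      -ofReal_cos, -ofReal_sin, exp_neg, mul_add, exp_add] <;>
    field_simp <;>
    first | linear_combination hcs | ring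

noncomputable def gqspStep (A : Matrix (Fin 2) (Fin 2) ℂ) (PQ : ℂ[X] × ℂ[X]) : ℂ[X] × ℂ[X] :=
  (A 0 0 • (X * PQ.1) + A 0 1 • PQ.2, A 1 0 • (X * PQ.1) + A 1 1 • PQ.2)

noncomputable def gqspPoly (θ φ : ℕ → ℝ) (l : ℝ) : ℕ → ℂ[X] × ℂ[X]
  | 0 => (C (gqspR (θ 0) (φ 0) l 0 0), C (gqspR (θ 0) (φ 0) l 1 0))
  | k + 1 => gqspStep (gqspR (θ (k + 1)) (φ (k + 1)) 0) (gqspPoly θ φ l k)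

theorem gqspStep_natDegree_le {A : Matrix (Fin 2) (Fin 2) ℂ} {PQ : ℂ[X] × ℂ[X]} {k : ℕ}
    (hP : PQ.1.natDegree ≤ k) (hQ : PQ.2.natDegree ≤ k) :
    (gqspStep A PQ).1.natDegree ≤ k + 1 ∧ (gqspStep A PQ).2.natDegree ≤ k + 1 := by
  have hXP : (X * PQ.1).natDegree ≤ k + 1 :=
    natDegree_mul_le.trans (by rw [natDegree_X]; omega)
  have hQ' : PQ.2.natDegree ≤ k + 1 := hQ.trans k.le_succ
  exact ⟨natDegree_add_le_of_degree_le (natDegree_smul_le _ _ |>.trans hXP)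
      (natDegree_smul_le _ _ |>.trans hQ'),
    natDegree_add_le_of_degree_le (natDegree_smul_le _ _ |>.trans hXP)
      (natDegree_smul_le _ _ |>.trans hQ')⟩

theorem gqspPoly_natDegree_le (θ φ : ℕ → ℝ) (l : ℝ) (d : ℕ) :
    (gqspPoly θ φ l d).1.natDegree ≤ d ∧ (gqspPoly θ φ l d).2.natDegree ≤ d := by
  induction d with
  | zero => simp [gqspPoly]
  | succ k ih => exact gqspStep_natDegree_le ih.1 ih.2

theorem normSq_eval_gqspStep {A : Matrix (Fin 2) (Fin 2) ℂ} (hA : A ∈ unitaryGroup (Fin 2) ℂ)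
    (PQ : ℂ[X] × ℂ[X]) {z : ℂ} (hz : ‖z‖ = 1) :
    normSq ((gqspStep A PQ).1.eval z) + normSq ((gqspStep A PQ).2.eval z) =
      normSq (PQ.1.eval z) + normSq (PQ.2.eval z) := by
  have hz' : normSq z = 1 := by rw [normSq_eq_norm_sq, hz, one_pow]
  simp only [gqspStep, eval_add, eval_smul, eval_mul, eval_X, smul_eq_mul]
  rw [normSq_add_normSq_of_mem_unitaryGroup hA, normSq_mul, hz', one_mul]

theorem normSq_eval_gqspPoly (θ φ : ℕ → ℝ) (l : ℝ) (d : ℕ) {z : ℂ} (hz : ‖z‖ = 1) :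
    normSq ((gqspPoly θ φ l d).1.eval z) + normSq ((gqspPoly θ φ l d).2.eval z) = 1 := by
  induction d with
  | zero =>
    simpa [gqspPoly] using
      normSq_add_normSq_of_mem_unitaryGroup (gqspR_mem_unitaryGroup (θ 0) (φ 0) l) 1 0
  | succ k ih => rw [gqspPoly, normSq_eval_gqspStep (gqspR_mem_unitaryGroup ..) _ hz, ih]

theorem gqspProdM_toBlocks (n : ℕ) (θ φ : ℕ → ℝ) (l : ℝ) (U : Matrix (Fin n) (Fin n) ℂ)
    (d : ℕ) :
    (gqspProdM n θ φ l U d).toBlocks₁₁ = aeval U (gqspPoly θ φ l d).1 ∧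
      (gqspProdM n θ φ l U d).toBlocks₂₁ = aeval U (gqspPoly θ φ l d).2 := by
  induction d with
  | zero => simp [gqspProdM, gqspPoly, kronI, Algebra.algebraMap_eq_smul_one]
  | succ k ih =>
    simp only [gqspProdM, gqspPoly, gqspStep, kronI_mul_fromBlocks_one,
      toBlocks₁₁_fromBlocks_mul, toBlocks₂₁_fromBlocks_mul, ih.1, ih.2, map_add, map_smul,
      map_mul, aeval_X, smul_mul_assoc, one_mul, and_self]

theorem gqsp_block_encoding (d : ℕ) (θ φ : ℕ → ℝ) (l : ℝ) :
    ∃ P Q : Polynomial ℂ, P.natDegree ≤ d ∧ Q.natDegree ≤ d ∧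
      (∀ z : ℂ, ‖z‖ = 1 → ‖P.eval z‖ ^ 2 + ‖Q.eval z‖ ^ 2 = 1) ∧
      ∀ n : ℕ, 1 ≤ n → ∀ U : Matrix (Fin n) (Fin n) ℂ,
        U ∈ Matrix.unitaryGroup (Fin n) ℂ →
          (gqspProdM n θ φ l U d).toBlocks₁₁ = (Polynomial.aeval U) P ∧
          (gqspProdM n θ φ l U d).toBlocks₂₁ = (Polynomial.aeval U) Q := by
  obtain ⟨hP, hQ⟩ := gqspPoly_natDegree_le θ φ l d
  refine ⟨_, _, hP, hQ, fun z hz => ?_, fun n _ U _ => gqspProdM_toBlocks n θ φ l U d⟩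
  simpa only [Complex.sq_norm] using normSq_eval_gqspPoly θ φ l d hz
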